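/- arXiv:0910.1360 — 6 statements merged into one kernel-verified Lean document; each statement's English description precedes it below -/
import Mathlib

section
/- Let X be a locally compact non-compact Hausdorff space and let f be a continuous map from X into a compact Hausdorff space K with X ∩ K = ∅. If both the one-point compactification A(X) and K are Rosenthal compact, then the compactification A_f(X,f) is Rosenthal compact. -/
open Filter Topology Set

universe u v

/-- A real-valued function is of Baire class one if it is a pointwise limit of a
sequence of continuous functions. -/
def BaireClassOne {P : Type*} [TopologicalSpace P] (f : P → ℝ) : Prop :=
  ∃ g : ℕ → P → ℝ, (∀ n, Continuous (g n)) ∧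
    ∀ x, Filter.Tendsto (fun n => g n x) Filter.atTop (nhds (f x))

/-- A Rosenthal compact: a compact space homeomorphic to a subspace of the space
`B₁(P)` of Baire class one functions on a Polish space `P`, with the pointwise topology. -/
def IsRosenthal (K : Type u) [TopologicalSpace K] : Prop :=
  CompactSpace K ∧
    ∃ (P : Type) (_ : TopologicalSpace P) (_ : PolishSpace P) (F : Set (P → ℝ)),
      (∀ f ∈ F, BaireClassOne f) ∧ Nonempty (K ≃ₜ F)

/-- The defining conditions for the topology of the compactification `A_f(X,f)`,
modelled on the disjoint union `X ⊕ K`: it is compact Hausdorff, extends the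
topologies of `X` and of `K` (i.e. the two inclusions are embeddings), and makes
the retraction `r` (given by `f` on `X` and the identity on `K`) continuous. -/
def CompactExtTopology (X K : Type u) [tX : TopologicalSpace X]
    [tK : TopologicalSpace K] (f : X → K) (τ : TopologicalSpace (X ⊕ K)) : Prop :=
  @CompactSpace (X ⊕ K) τ ∧ @T2Space (X ⊕ K) τ ∧
    @IsEmbedding X (X ⊕ K) tX τ Sum.inl ∧ @IsEmbedding K (X ⊕ K) tK τ Sum.inr ∧
    @Continuous (X ⊕ K) K τ tK (Sum.elim f id)

/-!
Collapsing `K` to a point gives a continuous map `A_f(X,f) → A(X)`, and together with the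
retraction `r : A_f(X,f) → K` it embeds `A_f(X,f)` into `A(X) × K`. Rosenthal compacts are
closed under finite products (functions on `P` and on `Q` are glued to functions on `P ⊕ Q`)
and under closed subspaces.
-/

lemma BaireClassOne.sumElim {P Q : Type*} [TopologicalSpace P] [TopologicalSpace Q]
    {u : P → ℝ} {v : Q → ℝ} (hu : BaireClassOne u) (hv : BaireClassOne v) :
    BaireClassOne (Sum.elim u v) := by
  obtain ⟨g, hg, hgu⟩ := hu
  obtain ⟨h, hh, hhv⟩ := hv
  refine ⟨fun n => Sum.elim (g n) (h n), fun n => (hg n).sumElim (hh n), ?_⟩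
  rintro (p | q)
  · exact hgu p
  · exact hhv q

lemma IsRosenthal.of_isEmbedding {A : Type u} {B : Type v} [TopologicalSpace A]
    [TopologicalSpace B] [CompactSpace A] (hB : IsRosenthal B) {e : A → B}
    (he : IsEmbedding e) : IsRosenthal A := by
  obtain ⟨-, P, _, _, F, hF, ⟨φ⟩⟩ := hB
  refine ⟨‹_›, P, ‹_›, ‹_›, range (fun a => (φ (e a) : P → ℝ)), ?_, ?_⟩
  · rintro _ ⟨a, rfl⟩
    exact hF _ (φ (e a)).2
  · exact ⟨(IsEmbedding.subtypeVal.comp (φ.isEmbedding.comp he)).toHomeomorph⟩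

lemma IsRosenthal.prod {A : Type u} {B : Type v} [TopologicalSpace A] [TopologicalSpace B]
    (hA : IsRosenthal A) (hB : IsRosenthal B) : IsRosenthal (A × B) := by
  obtain ⟨_, P, _, _, F, hF, ⟨φ⟩⟩ := hA
  obtain ⟨_, Q, _, _, G, hG, ⟨ψ⟩⟩ := hB
  let Φ : (P → ℝ) × (Q → ℝ) ≃ₜ (P ⊕ Q → ℝ) := Homeomorph.sumArrowHomeomorphProdArrow.symm
  have hΦ : ∀ u v, Φ (u, v) = Sum.elim u v := fun u v => by
    ext (p | q) <;> rfl
  refine ⟨inferInstance, P ⊕ Q, inferInstance, inferInstance, Φ '' (F ×ˢ G), ?_, ?_⟩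
  · rintro _ ⟨⟨u, v⟩, ⟨hu, hv⟩, rfl⟩
    rw [hΦ]
    exact (hF u hu).sumElim (hG v hv)
  · exact ⟨((φ.prodCongr ψ).trans (Homeomorph.Set.prod F G).symm).trans (Φ.image (F ×ˢ G))⟩

namespace OnePoint

lemma continuous_of_isOpenEmbedding {X Y : Type*} [TopologicalSpace X]
    [TopologicalSpace Y] [T2Space Y] {e : X → Y} (he : IsOpenEmbedding e)
    {φ : Y → OnePoint X} (hφe : ∀ x, φ (e x) = x) (hφ : ∀ y ∉ range e, φ y = ∞) :
    Continuous φ := by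
  refine continuous_def.2 fun s hs => ?_
  by_cases hinfty : ∞ ∈ s
  · obtain ⟨-, hcpt⟩ := (isOpen_iff_of_mem hinfty).1 hs
    have : φ ⁻¹' s = (e '' ((↑) ⁻¹' s)ᶜ)ᶜ := by
      ext y
      by_cases hy : y ∈ range e
      · obtain ⟨x, rfl⟩ := hy
        simp [hφe, he.injective.eq_iff]
      · simp_all
    rw [this]
    exact (hcpt.image he.continuous).isClosed.isOpen_compl
  · have : φ ⁻¹' s = e '' ((↑) ⁻¹' s) := by
      ext y
      by_cases hy : y ∈ range e
      · obtain ⟨x, rfl⟩ := hy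
        simp [hφe, he.injective.eq_iff]
      · simp_all
    rw [this]
    exact he.isOpenMap _ ((isOpen_iff_of_notMem hinfty).1 hs)

end OnePoint

open OnePoint

theorem isRosenthal_compactExt_general {X K : Type u} [TopologicalSpace X] [TopologicalSpace K]
    [LocallyCompactSpace X] [T2Space X] [CompactSpace K] [T2Space K]
    (f : X → K)
    (τ : TopologicalSpace (X ⊕ K)) (hτ : CompactExtTopology X K f τ)
    (hX : IsRosenthal (OnePoint X)) (hK : IsRosenthal K) :
    @IsRosenthal (X ⊕ K) τ := by
  obtain ⟨_, _, hinl, hinr, hr⟩ := hτ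
  let _ := τ
  have hinl_open : IsOpenEmbedding (Sum.inl : X → X ⊕ K) :=
    ⟨hinl, by rw [← compl_range_inr]; exact (isCompact_range hinr.continuous).isClosed.isOpen_compl⟩
  let φ : X ⊕ K → OnePoint X := Sum.elim (↑) fun _ => ∞
  have hφ : Continuous φ := OnePoint.continuous_of_isOpenEmbedding hinl_open (fun _ => rfl)
    (by rintro (x | k) hz <;> simp_all [φ])
  have hinj : Function.Injective fun z => (φ z, Sum.elim f id z) := by
    rintro (x | k) (y | l) h <;> simp_all [φ, OnePoint.coe_injective.eq_iff]
  exact (hX.prod hK).of_isEmbedding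
    ((hφ.prodMk hr).isClosedEmbedding hinj).isEmbedding

/-- If both the one-point compactification of `X` and `K` are Rosenthal compact,
then the compactification `A_f(X,f)` is Rosenthal compact. -/
theorem isRosenthal_compactExt {X K : Type u} [TopologicalSpace X] [TopologicalSpace K]
    [LocallyCompactSpace X] [T2Space X] [NoncompactSpace X] [CompactSpace K] [T2Space K]
    (f : X → K) (hf : Continuous f)
    (τ : TopologicalSpace (X ⊕ K)) (hτ : CompactExtTopology X K f τ)
    (hX : IsRosenthal (OnePoint X)) (hK : IsRosenthal K) :
    @IsRosenthal (X ⊕ K) τ :=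
  isRosenthal_compactExt_general f τ hτ hX hK
end

section
/- Let X be a locally compact non-compact Hausdorff space and let f: X → K be a continuous map into a compact Hausdorff space K with X ∩ K = ∅. Then there exists a unique compact Hausdorff topology τ on X ∪ K which extends the topologies of X and of K and for which the map r: X ∪ K → K, defined by r↾X = f and r↾K = id_K, is continuous; moreover, the family B = τ_X ∪ { (U ∪ f⁻¹(U)) \ F : U open in K, F ⊆ X compact } is a basis of τ, where τ_X is the topology of X. -/
/-! The map `X ⊕ K → OnePoint X × K` sending `x` to `(x, f x)` and `k` to `(∞, k)` is injective,
and its image, the graph of `f` together with `{∞} × K`, is closed. The topology it induces is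
therefore compact Hausdorff; it restricts to the given topologies on `X` and `K`, and `r` is the
second projection composed with this map. In any topology with these properties the sets of the
family `B` are open, so such a topology is finer than the one generated by `B`, which is the
induced one; and a compact topology finer than a Hausdorff one equals it. -/

open Filter Topology Set

universe u v

theorem TopologicalSpace.eq_of_le_of_compactSpace_of_t2Space {α : Type*}
    {t₁ t₂ : TopologicalSpace α} (h : t₁ ≤ t₂) (hc : @CompactSpace α t₁) (ht : @T2Space α t₂) :
    t₁ = t₂ := by
  refine le_antisymm h fun s hs => ?_
  have := @Continuous.isClosedMap α α t₁ t₂ hc ht id (continuous_id_of_le h) sᶜ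
    ((@isClosed_compl_iff α t₁ s).mpr hs)
  rwa [image_id, @isClosed_compl_iff α t₂] at this

namespace CompactExtTopology

open OnePoint TopologicalSpace

variable {X K : Type u} {f : X → K}

def toOnePointProd (f : X → K) : X ⊕ K → OnePoint X × K :=
  Sum.elim (fun x => ((x : OnePoint X), f x)) (fun k => (∞, k))

theorem toOnePointProd_injective : Function.Injective (toOnePointProd f) := by
  rintro (x | k) (y | l) h <;> simp_all [toOnePointProd]

theorem snd_comp_toOnePointProd : Prod.snd ∘ toOnePointProd f = Sum.elim f id := by
  ext (x | k) <;> rfl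

theorem compl_range_toOnePointProd :
    (range (toOnePointProd f))ᶜ = Prod.map (↑) id '' {p : X × K | f p.1 ≠ p.2} := by
  ext ⟨a, k⟩
  induction a using OnePoint.rec <;> simp [toOnePointProd]

variable [TopologicalSpace X] [TopologicalSpace K]

theorem isClosed_range_toOnePointProd [T2Space K] (hf : Continuous f) :
    IsClosed (range (toOnePointProd f)) := by
  rw [← isOpen_compl_iff, compl_range_toOnePointProd]
  exact (OnePoint.isOpenEmbedding_coe.prodMap .id).isOpenMap _
    (isOpen_ne_fun (hf.comp continuous_fst) continuous_snd)

@[reducible] def graphTopology (f : X → K) : TopologicalSpace (X ⊕ K) :=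
  .induced (toOnePointProd f) inferInstance

theorem isClosedEmbedding_toOnePointProd [T2Space K] (hf : Continuous f) :
    @IsClosedEmbedding _ _ (graphTopology f) _ (toOnePointProd f) :=
  @IsClosedEmbedding.mk _ _ (graphTopology f) _ _
    (@IsEmbedding.induced _ _ _ _ toOnePointProd_injective) (isClosed_range_toOnePointProd hf)

theorem compactExtTopology_graphTopology [LocallyCompactSpace X] [T2Space X] [CompactSpace K]
    [T2Space K] (hf : Continuous f) : CompactExtTopology X K f (graphTopology f) := by
  let := graphTopology f
  have he := isClosedEmbedding_toOnePointProd hf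
  refine ⟨he.compactSpace, he.isEmbedding.t2Space, ?_, ?_, ?_⟩
  · rw [← he.isEmbedding.of_comp_iff]
    exact (OnePoint.isOpenEmbedding_coe.isEmbedding.prodMap .id).comp (isEmbedding_graph hf)
  · rw [← he.isEmbedding.of_comp_iff]
    exact isEmbedding_prodMkRight _
  · rw [← snd_comp_toOnePointProd]
    exact continuous_snd.comp he.continuous

def basis (f : X → K) : Set (Set (X ⊕ K)) :=
  {S | ∃ V : Set X, IsOpen V ∧ S = Sum.inl '' V} ∪
    {S | ∃ (U : Set K) (F : Set X), IsOpen U ∧ IsCompact F ∧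
      S = (Sum.inl '' (f ⁻¹' U) ∪ Sum.inr '' U) \ Sum.inl '' F}

theorem isOpen_of_mem_basis [CompactSpace K] {τ : TopologicalSpace (X ⊕ K)}
    (h : CompactExtTopology X K f τ) {S : Set (X ⊕ K)} (hS : S ∈ basis f) : IsOpen[τ] S := by
  let := τ
  obtain ⟨-, hT2, hinl, hinr, hr⟩ := h
  rcases hS with ⟨V, hV, rfl⟩ | ⟨U, F, hU, hF, rfl⟩
  · have hrange : IsOpen (range (Sum.inl : X → X ⊕ K)) := by
      rw [← compl_range_inr, isOpen_compl_iff, ← image_univ]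
      exact (isCompact_univ.image hinr.continuous).isClosed
    exact (IsOpenEmbedding.mk hinl hrange).isOpenMap V hV
  · rw [show Sum.inl '' (f ⁻¹' U) ∪ Sum.inr '' U = Sum.elim f id ⁻¹' U from
      (preimage_sumElim U f id).symm]
    exact (hU.preimage hr).sdiff (hF.image hinl.continuous).isClosed

theorem isTopologicalBasis_basis [LocallyCompactSpace X] [T2Space X] [CompactSpace K]
    [T2Space K] (hf : Continuous f) :
    @IsTopologicalBasis _ (graphTopology f) (basis f) := by
  let := graphTopology f
  have hτ := compactExtTopology_graphTopology hf
  refine isTopologicalBasis_of_isOpen_of_nhds (fun S hS => hτ.isOpen_of_mem_basis hS) ?_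
  rintro (x | k) S hp hS
  · exact ⟨Sum.inl '' (Sum.inl ⁻¹' S), Or.inl ⟨_, hS.preimage hτ.2.2.1.continuous, rfl⟩,
      mem_image_of_mem _ hp, image_preimage_subset _ _⟩
  · obtain ⟨W, hW, rfl⟩ := isOpen_induced_iff.mp hS
    obtain ⟨⟨F, U⟩, ⟨⟨-, hF⟩, hkU, hU⟩, hFU⟩ :=
      (OnePoint.hasBasis_nhds_infty.prod_nhds (nhds_basis_opens k)).mem_iff.mp (hW.mem_nhds hp)
    refine ⟨_, Or.inr ⟨U, F, hU, hF, rfl⟩, by simpa using hkU, ?_⟩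
    rintro (y | l) ⟨hyU, hyF⟩
    · apply hFU
      simp_all [toOnePointProd]
    · apply hFU
      simp_all [toOnePointProd]

theorem eq_graphTopology [LocallyCompactSpace X] [T2Space X] [CompactSpace K]
    [T2Space K] (hf : Continuous f) {τ : TopologicalSpace (X ⊕ K)}
    (h : CompactExtTopology X K f τ) : τ = graphTopology f := by
  refine TopologicalSpace.eq_of_le_of_compactSpace_of_t2Space ?_ h.1
    (compactExtTopology_graphTopology hf).2.1
  calc τ ≤ generateFrom (basis f) := le_generateFrom fun S hS => h.isOpen_of_mem_basis hS
    _ = graphTopology f := (@IsTopologicalBasis.eq_generateFrom _ (graphTopology f) _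
      (isTopologicalBasis_basis hf)).symm

end CompactExtTopology

theorem existsUnique_compactExtTopology_general {X K : Type u} [TopologicalSpace X]
    [TopologicalSpace K] [LocallyCompactSpace X] [T2Space X]
    [CompactSpace K] [T2Space K] (f : X → K) (hf : Continuous f) :
    ∃ τ : TopologicalSpace (X ⊕ K), CompactExtTopology X K f τ ∧
      (∀ τ' : TopologicalSpace (X ⊕ K), CompactExtTopology X K f τ' → τ' = τ) ∧
      @TopologicalSpace.IsTopologicalBasis (X ⊕ K) τ
        ({S : Set (X ⊕ K) | ∃ V : Set X, IsOpen V ∧ S = Sum.inl '' V} ∪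
          {S : Set (X ⊕ K) | ∃ (U : Set K) (F : Set X), IsOpen U ∧ IsCompact F ∧
            S = (Sum.inl '' (f ⁻¹' U) ∪ Sum.inr '' U) \ Sum.inl '' F}) :=
  ⟨_, CompactExtTopology.compactExtTopology_graphTopology hf,
    fun _ h => CompactExtTopology.eq_graphTopology hf h,
    CompactExtTopology.isTopologicalBasis_basis hf⟩

/-- There is a unique compact Hausdorff topology on `X ∪ K` extending the topologies
of `X` and `K` and making the retraction continuous; moreover the family
`τ_X ∪ {(U ∪ f⁻¹(U)) \ F : U open in K, F ⊆ X compact}` is a basis of this topology. -/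
theorem existsUnique_compactExtTopology {X K : Type u} [TopologicalSpace X]
    [TopologicalSpace K] [LocallyCompactSpace X] [T2Space X] [NoncompactSpace X]
    [CompactSpace K] [T2Space K] (f : X → K) (hf : Continuous f) :
    ∃ τ : TopologicalSpace (X ⊕ K), CompactExtTopology X K f τ ∧
      (∀ τ' : TopologicalSpace (X ⊕ K), CompactExtTopology X K f τ' → τ' = τ) ∧
      @TopologicalSpace.IsTopologicalBasis (X ⊕ K) τ
        ({S : Set (X ⊕ K) | ∃ V : Set X, IsOpen V ∧ S = Sum.inl '' V} ∪
          {S : Set (X ⊕ K) | ∃ (U : Set K) (F : Set X), IsOpen U ∧ IsCompact F ∧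
            S = (Sum.inl '' (f ⁻¹' U) ∪ Sum.inr '' U) \ Sum.inl '' F}) :=
  existsUnique_compactExtTopology_general f hf
end

section
/- Let (T,<) be a tree with the interval topology and let f: A(T) → X be a map into a topological space X. Then f is continuous if and only if it satisfies both: (1) lim_{α<λ} f(t_α) = f(t) whenever λ is a regular infinite cardinal and (t_α)_{α<λ} is a strictly increasing sequence in T with t = sup_{α<λ} t_α, where t = ∞ if the sequence is unbounded in T; and (2) lim_{n→∞} f(t_n) = f(∞) whenever (t_n)_{n∈ℕ} is an infinite antichain in T. -/
open Filter Topology Set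

universe u v

/-- A tree in the sense of the paper: a partial order with a minimal element `⊥`,
binary greatest lower bounds, and each set of predecessors `[0,t)` well ordered
(a linearly ordered, well-founded chain). -/
class TreeOrder (T : Type u) extends SemilatticeInf T, OrderBot T where
  chain_lt : ∀ t : T, IsChain (· ≤ ·) {x : T | x < t}
  isWF_lt : ∀ t : T, Set.IsWF {x : T | x < t}

/-- The interval topology, generated by the intervals `(s,t]` (together with the
initial intervals `[0,t]`, which make the root an interior point of `[0,t]`). -/
def intervalTopology (T : Type u) [Preorder T] : TopologicalSpace T :=
  TopologicalSpace.generateFrom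
    ({S : Set T | ∃ a b : T, S = Set.Ioc a b} ∪ {S : Set T | ∃ b : T, S = Set.Iic b})

instance TreeOrder.toTopologicalSpace (T : Type u) [TreeOrder T] : TopologicalSpace T :=
  intervalTopology T

/-!
In the interval topology every `Iic t` is open, and it is compact because it is a well-ordered
chain. So a compact subset of `T` lies below finitely many points, and a sequence tends to `∞` in
`A(T)` as soon as it eventually leaves every `Iic t`: unbounded increasing sequences and
injective antichains do. This gives the forward direction.

Conversely, if `g` is discontinuous at `t ∈ T`, the points below `t` where `g` stays away from
`g t` are cofinal in `Iio t`, and a cofinal subsequence of regular length violates (1). At `∞`,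
let `K` be the closed set of points where `g` stays out of a neighbourhood of `g ∞`. By (1) every
chain of `K` is bounded, so by Zorn every point of `K` lies below a maximal one; the maximal points
form an antichain, finite by (2). Hence `K` lies in a finite union of the compact sets `Iic m`.
-/

open OnePoint

theorem isLUB_of_forall_exists_gt {α : Type*} [SemilatticeInf α] {B : Set α} {t : α}
    (hB : t ∈ upperBounds B) (h : ∀ a < t, ∃ b ∈ B, a < b) : IsLUB B t := by
  refine ⟨hB, fun u hu => by_contra fun htu => ?_⟩
  obtain ⟨b, hb, hub⟩ := h (t ⊓ u) (inf_lt_left.2 htu)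
  exact hub.not_ge (le_inf (hB hb) (hu hb))

theorem Cardinal.IsRegular.nonempty_toType {c : Cardinal} (hc : c.IsRegular) :
    Nonempty c.ord.ToType :=
  Ordinal.nonempty_toType_iff.2 hc.ord_pos.ne'

theorem Order.isRegular_cof (α : Type*) [LinearOrder α] [WellFoundedLT α] [Nonempty α]
    [NoMaxOrder α] : (Order.cof α).IsRegular :=
  ⟨Order.aleph0_le_cof, (Order.cof_ord_cof α).ge⟩

theorem Order.exists_strictMono_isCofinal_range (α : Type*) [LinearOrder α] [WellFoundedLT α] :
    ∃ f : (Order.cof α).ord.ToType → α, StrictMono f ∧ IsCofinal (range f) := by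
  obtain ⟨s, hs, htype⟩ := Ordinal.exists_ord_cof_eq α
  obtain ⟨e⟩ := Ordinal.type_eq.1 (htype.trans (Ordinal.type_toType _).symm)
  let e' := (OrderIso.ofRelIsoLT e).symm
  refine ⟨fun x => e' x, (Subtype.strictMono_coe _).comp e'.strictMono, ?_⟩
  rwa [← Subtype.range_coe (s := s), ← e'.surjective.range_comp] at hs

theorem IsChain.exists_isRegular_strictMono {α : Type u} [PartialOrder α] [WellFoundedLT α]
    {C : Set α} (hC : IsChain (· ≤ ·) C) (hne : C.Nonempty) (hmax : ∀ c ∈ C, ∃ d ∈ C, c < d) :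
    ∃ lam : Cardinal.{u}, lam.IsRegular ∧ ∃ f : lam.ord.ToType → α, StrictMono f ∧
      range f ⊆ C ∧ upperBounds (range f) = upperBounds C := by
  classical
  let := hC.linearOrder
  have : Nonempty C := hne.to_subtype
  have : NoMaxOrder C := ⟨fun c => let ⟨d, hd, hcd⟩ := hmax c c.2; ⟨⟨d, hd⟩, hcd⟩⟩
  obtain ⟨f, hf, hcof⟩ := Order.exists_strictMono_isCofinal_range C
  have hfC : range ((↑) ∘ f : _ → α) ⊆ C := by
    rintro _ ⟨i, rfl⟩
    exact (f i).2
  refine ⟨_, Order.isRegular_cof C, (↑) ∘ f, (Subtype.strictMono_coe _).comp hf, hfC,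
    (upperBounds_mono_set hfC).antisymm' fun u hu c hc => ?_⟩
  obtain ⟨_, ⟨i, rfl⟩, hci⟩ := hcof ⟨c, hc⟩
  exact (show c ≤ f i from hci).trans (hu ⟨i, rfl⟩)

namespace TreeOrder

variable {T : Type u} [TreeOrder T]

theorem isChain_Iic (t : T) : IsChain (· ≤ ·) (Iic t) := by
  intro a ha b hb hab
  rcases (show a ≤ t from ha).lt_or_eq with ha | rfl
  · rcases (show b ≤ t from hb).lt_or_eq with hb | rfl
    · exact chain_lt t ha hb hab
    · exact Or.inl ha.le
  · exact Or.inr hb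

instance wellFoundedLT : WellFoundedLT T :=
  ⟨⟨fun t => ⟨t, fun _ hx => (isWF_lt t).induction hx fun y hy ih =>
    ⟨y, fun z hz => ih z (hz.trans hy) hz⟩⟩⟩⟩

theorem exists_isLUB {C : Set T} (hC : BddAbove C) : ∃ t, IsLUB C t := by
  obtain ⟨m, hm, hmin⟩ := wellFounded_lt.has_min (upperBounds C) hC
  refine ⟨m, hm, fun u hu => ?_⟩
  have hum : u ⊓ m ∈ upperBounds C := fun c hc => le_inf (hu hc) (hm hc)
  exact inf_le_right.eq_of_not_lt (hmin _ hum) ▸ inf_le_left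

theorem isOpen_Ioc (a b : T) : IsOpen (Ioc a b) :=
  .basic _ (.inl ⟨a, b, rfl⟩)

theorem isOpen_Iic (b : T) : IsOpen (Iic b) :=
  .basic _ (.inr ⟨b, rfl⟩)

theorem Ioc_mem_nhds {a t : T} (h : a < t) : Ioc a t ∈ 𝓝 t :=
  (isOpen_Ioc a t).mem_nhds ⟨h, le_rfl⟩

theorem Iic_mem_nhds (t : T) : Iic t ∈ 𝓝 t :=
  (isOpen_Iic t).mem_nhds le_rfl

theorem exists_Ioc_subset_or_Iic_subset_of_isOpen {O : Set T} (hO : IsOpen O) {t : T}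
    (ht : t ∈ O) : (∃ a < t, Ioc a t ⊆ O) ∨ Iic t ⊆ O := by
  induction hO generalizing t with
  | basic s hs =>
    rcases hs with ⟨a, b, rfl⟩ | ⟨b, rfl⟩
    · exact .inl ⟨a, ht.1, fun x hx => ⟨hx.1, hx.2.trans ht.2⟩⟩
    · exact .inr fun x hx => hx.trans ht
  | univ => exact .inr (subset_univ _)
  | inter s₁ s₂ _ _ ih₁ ih₂ =>
    rcases ih₁ ht.1 with ⟨a₁, ha₁, hs₁⟩ | hs₁ <;> rcases ih₂ ht.2 with ⟨a₂, ha₂, hs₂⟩ | hs₂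
    · rcases (isChain_Iic t).total ha₁.le ha₂.le with h | h
      · exact .inl ⟨a₂, ha₂, fun x hx => ⟨hs₁ ⟨h.trans_lt hx.1, hx.2⟩, hs₂ hx⟩⟩
      · exact .inl ⟨a₁, ha₁, fun x hx => ⟨hs₁ hx, hs₂ ⟨h.trans_lt hx.1, hx.2⟩⟩⟩
    · exact .inl ⟨a₁, ha₁, fun x hx => ⟨hs₁ hx, hs₂ hx.2⟩⟩
    · exact .inl ⟨a₂, ha₂, fun x hx => ⟨hs₁ hx.2, hs₂ hx⟩⟩
    · exact .inr fun x hx => ⟨hs₁ hx, hs₂ hx⟩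
  | sUnion S _ ih =>
    obtain ⟨s, hsS, hts⟩ := ht
    exact (ih s hsS hts).imp (fun ⟨a, ha, h⟩ => ⟨a, ha, h.trans (subset_sUnion_of_mem hsS)⟩)
      fun h => h.trans (subset_sUnion_of_mem hsS)

theorem exists_Ioc_subset_or_Iic_subset_of_mem_nhds {s : Set T} {t : T} (hs : s ∈ 𝓝 t) :
    (∃ a < t, Ioc a t ⊆ s) ∨ Iic t ⊆ s := by
  obtain ⟨O, hOs, hO, htO⟩ := mem_nhds_iff.1 hs
  exact (exists_Ioc_subset_or_Iic_subset_of_isOpen hO htO).imp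
    (fun ⟨a, ha, h⟩ => ⟨a, ha, h.trans hOs⟩) fun h => h.trans hOs

theorem exists_Icc_subset_of_isLUB {C s : Set T} {t : T} (hC : C.Nonempty) (ht : IsLUB C t)
    (hs : s ∈ 𝓝 t) : ∃ c ∈ C, Icc c t ⊆ s := by
  rcases exists_Ioc_subset_or_Iic_subset_of_mem_nhds hs with ⟨a, hat, has⟩ | hts
  · obtain ⟨c, hc, hca⟩ : ∃ c ∈ C, ¬ c ≤ a := by
      by_contra! h
      exact hat.not_ge (ht.2 h)
    have hac : a < c := (isChain_Iic t).lt_of_not_ge (ht.1 hc) hat.le hca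
    exact ⟨c, hc, fun x hx => has ⟨hac.trans_le hx.1, hx.2⟩⟩
  · obtain ⟨c, hc⟩ := hC
    exact ⟨c, hc, fun x hx => hts hx.2⟩

theorem mem_closure_of_isLUB {C : Set T} {t : T} (hC : C.Nonempty) (ht : IsLUB C t) :
    t ∈ closure C :=
  mem_closure_iff_nhds.2 fun _ hs =>
    let ⟨c, hc, hcs⟩ := exists_Icc_subset_of_isLUB hC ht hs
    ⟨c, hcs ⟨le_rfl, ht.1 hc⟩, hc⟩

theorem tendsto_atTop_isLUB {ι : Type*} [Preorder ι] [Nonempty ι] {f : ι → T} (hf : Monotone f)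
    {t : T} (ht : IsLUB (range f) t) : Tendsto f atTop (𝓝 t) := fun s hs => by
  obtain ⟨_, ⟨i, rfl⟩, his⟩ := exists_Icc_subset_of_isLUB (range_nonempty f) ht hs
  exact mem_map.2 (mem_of_superset (Ici_mem_atTop i) fun j hij => his ⟨hf hij, ht.1 ⟨j, rfl⟩⟩)

theorem isCompact_Iic (m : T) : IsCompact (Iic m) := by
  refine isCompact_iff_ultrafilter_le_nhds.2 fun F hF => ?_
  -- the ultrafilter converges to the least `x ≤ m` with `Iic x ∈ F`
  obtain ⟨x, ⟨hxm, hxF⟩, hmin⟩ := wellFounded_lt.has_min {x | x ≤ m ∧ Iic x ∈ F}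
    ⟨m, le_rfl, le_principal_iff.1 hF⟩
  refine ⟨x, hxm, fun s hs => ?_⟩
  rcases exists_Ioc_subset_or_Iic_subset_of_mem_nhds hs with ⟨a, hax, has⟩ | hxs
  · have haF : (Iic a)ᶜ ∈ F :=
      F.compl_mem_iff_notMem.2 fun h => hmin a ⟨hax.le.trans hxm, h⟩ hax
    refine mem_of_superset (inter_mem hxF haF) fun y ⟨hyx, hya⟩ => has ⟨?_, hyx⟩
    exact (isChain_Iic x).lt_of_not_ge hyx hax.le hya
  · exact mem_of_superset hxF hxs

theorem isCompact_of_isClosed_of_bddAbove_of_finite {K : Set T} (hK : IsClosed K)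
    (hchain : ∀ C ⊆ K, IsChain (· ≤ ·) C → BddAbove C)
    (hanti : ∀ A ⊆ K, IsAntichain (· ≤ ·) A → A.Finite) : IsCompact K := by
  have hzorn : ∀ x ∈ K, ∃ m, x ≤ m ∧ Maximal (· ∈ K) m :=
    zorn_le_nonempty₀ K fun C hCK hC y hy => by
      obtain ⟨t, ht⟩ := exists_isLUB (hchain C hCK hC)
      exact ⟨t, hK.closure_subset_iff.2 hCK (mem_closure_of_isLUB ⟨y, hy⟩ ht), ht.1⟩
  have hfin : {m | Maximal (· ∈ K) m}.Finite :=
    hanti _ (fun _ hm => hm.prop) (setOfPred_maximal_antichain _)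
  refine (hfin.isCompact_biUnion fun m _ => isCompact_Iic m).of_isClosed_subset hK fun x hx => ?_
  obtain ⟨m, hxm, hm⟩ := hzorn x hx
  exact mem_biUnion hm hxm

theorem tendsto_coe_nhds_infty {ι : Type*} {l : Filter ι} {f : ι → T}
    (h : ∀ x, ∀ᶠ i in l, ¬ f i ≤ x) : Tendsto (fun i => (f i : OnePoint T)) l (𝓝 ∞) := by
  refine OnePoint.tendsto_coe_infty.comp
    (hasBasis_coclosedCompact.tendsto_right_iff.2 fun K ⟨_, hK⟩ => ?_)
  obtain ⟨s, hKs⟩ := hK.elim_finite_subcover Iic isOpen_Iic fun x _ => mem_iUnion.2 ⟨x, le_rfl⟩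
  filter_upwards [(eventually_all_finset s).2 fun x _ => h x] with i hi hiK
  obtain ⟨x, hx, hix⟩ := mem_iUnion₂.1 (hKs hiK)
  exact hi x hx hix

theorem tendsto_coe_nhds_infty_of_not_bddAbove {ι : Type*} [Preorder ι] {f : ι → T}
    (hf : Monotone f) (h : ¬ BddAbove (range f)) :
    Tendsto (fun i => (f i : OnePoint T)) atTop (𝓝 ∞) :=
  tendsto_coe_nhds_infty fun x => by
    obtain ⟨_, ⟨i, rfl⟩, hix⟩ := not_bddAbove_iff'.1 h x
    exact (eventually_ge_atTop i).mono fun j hij hjx => hix ((hf hij).trans hjx)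

theorem tendsto_coe_nhds_infty_of_pairwise {f : ℕ → T} (hf : Pairwise fun m n => ¬ f m ≤ f n) :
    Tendsto (fun n => (f n : OnePoint T)) atTop (𝓝 ∞) :=
  tendsto_coe_nhds_infty fun x => by
    have hx : {n | f n ≤ x}.Subsingleton := fun m hm n hn => by_contra fun hmn =>
      ((isChain_Iic x).total hm hn).elim (hf hmn) (hf (Ne.symm hmn))
    simpa [← Nat.cofinite_eq_atTop] using hx.finite.eventually_cofinite_notMem

variable {X : Type v} [TopologicalSpace X]

/-- Condition (1). -/
def PreservesChainLimits (g : OnePoint T → X) : Prop :=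
  ∀ lam : Cardinal.{u}, lam.IsRegular → ∀ f : lam.ord.ToType → T, StrictMono f →
    (∀ t : T, IsLUB (range f) t → Tendsto (fun a => g (f a)) atTop (𝓝 (g t))) ∧
    (¬ BddAbove (range f) → Tendsto (fun a => g (f a)) atTop (𝓝 (g ∞)))

/-- Condition (2). -/
def PreservesAntichainLimits (g : OnePoint T → X) : Prop :=
  ∀ f : ℕ → T, Pairwise (fun m n => ¬ f m ≤ f n) → Tendsto (fun n => g (f n)) atTop (𝓝 (g ∞))

theorem _root_.Continuous.preservesChainLimits {g : OnePoint T → X} (hg : Continuous g) :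
    PreservesChainLimits g := fun _ hlam _ hf =>
  have := hlam.nonempty_toType
  ⟨fun t ht => (hg.tendsto _).comp
      ((OnePoint.continuous_coe.tendsto t).comp (tendsto_atTop_isLUB hf.monotone ht)),
    fun h => (hg.tendsto _).comp (tendsto_coe_nhds_infty_of_not_bddAbove hf.monotone h)⟩

theorem _root_.Continuous.preservesAntichainLimits {g : OnePoint T → X} (hg : Continuous g) :
    PreservesAntichainLimits g := fun _ hf =>
  (hg.tendsto _).comp (tendsto_coe_nhds_infty_of_pairwise hf)

theorem PreservesChainLimits.continuous_comp_coe {g : OnePoint T → X}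
    (hg : PreservesChainLimits g) : Continuous fun x : T => g x := by
  refine continuous_iff_continuousAt.2 fun t => tendsto_nhds.2 fun U hU htU =>
    by_contra fun hnot => ?_
  set B := {x | x < t ∧ g x ∉ U}
  have hB : ∀ x ≤ t, x ∉ B → g x ∈ U := fun x hxt hxB =>
    hxt.lt_or_eq.elim (fun h => by_contra fun hx => hxB ⟨h, hx⟩) fun h => h ▸ htU
  have hcof : ∀ a < t, ∃ b ∈ B, a < b := fun a hat => by
    by_contra! h
    exact hnot <| mem_of_superset (Ioc_mem_nhds hat) fun x hx =>
      hB x hx.2 fun hxB => h x hxB hx.1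
  have hne : B.Nonempty := by
    by_contra! h
    exact hnot (mem_of_superset (Iic_mem_nhds t) fun x hx => hB x hx (h ▸ notMem_empty x))
  obtain ⟨lam, hlam, f, hf, hfB, hfub⟩ := ((isChain_Iic t).mono fun x hx => hx.1.le)
    |>.exists_isRegular_strictMono hne fun b hb => hcof b hb.1
  have hlub : IsLUB (range f) t := by
    rw [IsLUB, hfub]
    exact isLUB_of_forall_exists_gt (fun b hb => hb.1.le) hcof
  have := hlam.nonempty_toType
  obtain ⟨a, ha⟩ := (((hg lam hlam f hf).1 t hlub).eventually (hU.mem_nhds htU)).exists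
  exact (hfB ⟨a, rfl⟩).2 ha

theorem PreservesChainLimits.tendsto_coclosedCompact {g : OnePoint T → X}
    (hg₁ : PreservesChainLimits g) (hg₂ : PreservesAntichainLimits g) :
    Tendsto (fun x : T => g x) (coclosedCompact T) (𝓝 (g ∞)) := by
  refine tendsto_nhds.2 fun U hU hgU => ?_
  have hK : IsClosed ((fun x : T => g x) ⁻¹' Uᶜ) :=
    hU.isClosed_compl.preimage hg₁.continuous_comp_coe
  refine compl_compl (_ ⁻¹' U) ▸
    (isCompact_of_isClosed_of_bddAbove_of_finite hK ?_ ?_).compl_mem_coclosedCompact_of_isClosed hK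
  · intro C hCK hC
    by_contra hunbdd
    have hmax : ∀ c ∈ C, ∃ d ∈ C, c < d := fun c hc => by
      by_contra! h
      exact hunbdd ⟨c, fun d hd => hC.le_of_not_gt hc hd (h d hd)⟩
    obtain ⟨lam, hlam, f, hf, hfC, hfub⟩ :=
      hC.exists_isRegular_strictMono (nonempty_of_not_bddAbove hunbdd) hmax
    have := hlam.nonempty_toType
    obtain ⟨a, ha⟩ := (((hg₁ lam hlam f hf).2 (by rwa [BddAbove, hfub])).eventually
      (hU.mem_nhds hgU)).exists
    exact hCK (hfC ⟨a, rfl⟩) ha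
  · intro A hAK hA
    by_contra hinf
    let e := Set.Infinite.natEmbedding A hinf
    have he : Pairwise fun m n => ¬ (e m : T) ≤ e n := fun m n hmn =>
      hA (e m).2 (e n).2 (Subtype.val_injective.ne (e.injective.ne hmn))
    obtain ⟨n, hn⟩ := ((hg₂ _ he).eventually (hU.mem_nhds hgU)).exists
    exact hAK (e n).2 hn

theorem continuous_iff_preservesChainLimits_and_preservesAntichainLimits (g : OnePoint T → X) :
    Continuous g ↔ PreservesChainLimits g ∧ PreservesAntichainLimits g :=
  ⟨fun hg => ⟨hg.preservesChainLimits, hg.preservesAntichainLimits⟩, fun ⟨hg₁, hg₂⟩ =>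
    (OnePoint.continuous_iff g).2 ⟨hg₁.tendsto_coclosedCompact hg₂, hg₁.continuous_comp_coe⟩⟩

end TreeOrder

/-- A map on the one-point compactification of a tree is continuous if and only if
(1) it preserves limits of strictly increasing transfinite sequences (of regular
infinite length), where an unbounded sequence converges to `∞`, and (2) it sends
every infinite antichain to a sequence converging to the value at `∞`. -/
theorem continuous_iff_of_tree {T : Type u} [TreeOrder T] {X : Type v} [TopologicalSpace X]
    (g : OnePoint T → X) :
    Continuous g ↔
      ((∀ lam : Cardinal.{u}, lam.IsRegular → ∀ f : lam.ord.ToType → T, StrictMono f →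
          (∀ t : T, IsLUB (Set.range f) t →
            Filter.Tendsto (fun a => g (f a : OnePoint T)) Filter.atTop
              (nhds (g (t : OnePoint T)))) ∧
          (¬ BddAbove (Set.range f) →
            Filter.Tendsto (fun a => g (f a : OnePoint T)) Filter.atTop
              (nhds (g OnePoint.infty)))) ∧
        (∀ f : ℕ → T, (∀ m n : ℕ, m ≠ n → ¬ f m ≤ f n) →
          Filter.Tendsto (fun n => g (f n : OnePoint T)) Filter.atTop
            (nhds (g OnePoint.infty)))) := by
  exact TreeOrder.continuous_iff_preservesChainLimits_and_preservesAntichainLimits g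
end

section
/- Let T be an ℝ-embeddable tree of cardinality at most the continuum and let f: T → ℝ be a strictly order-preserving function. Then there exist a countably branching tree T′ containing T as a subtree and a strictly order-preserving function f′: T′ → ℝ such that f′↾T = f. -/
open Set

universe u

/-!
Fix an injection `ι : T ↪ ℕ^ℕ`, which exists since `|T| ≤ 𝔠`. Above every node `t` graft a copy of
the tree `ℕ^{<ω}` of finite words, and send each `s > t` through the branch of this copy given by
the infinite word `(j, ι s')`, where `s'` is the immediate successor of `t` below `s` and `j` is
chosen with `1/(j+1) ≤ f s' - f t`. Old successors of `t` thereby stop being immediate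
successors, and each word has only its `ℕ` one-letter extensions as immediate successors, so the
new tree is countably branching. Injectivity of `ι` makes distinct successors of `t` leave the
copy at a finite level, which is what keeps binary infima. A word of length `n` starting with `j`
gets the value `f t + (1 - 2⁻ⁿ)/(j+1) < f t + 1/(j+1)`, which extends `f` strictly monotonically.
-/

namespace TreeOrder

variable {T : Type u} [TreeOrder T]

theorem le_total_of_le {s x y : T} (hx : x ≤ s) (hy : y ≤ s) : x ≤ y ∨ y ≤ x := by
  rcases hx.eq_or_lt with rfl | hx
  · exact Or.inr hy
  rcases hy.eq_or_lt with rfl | hy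
  · exact Or.inl hx.le
  rcases eq_or_ne x y with rfl | hne
  · exact Or.inl le_rfl
  exact chain_lt s hx hy hne

theorem isWF_Iic (t : T) : (Iic t).IsWF := by
  rw [← Iio_insert]
  exact (isWF_lt t).insert t

/-- The least element of `(t, s]` (junk value `s` unless `t < s`). -/
noncomputable def succToward (t s : T) : T :=
  open Classical in
  if h : t < s then ((isWF_Iic s).mono Ioc_subset_Iic_self).min ⟨s, h, le_rfl⟩ else s

variable {t s x : T}

theorem succToward_mem (h : t < s) : succToward t s ∈ Ioc t s := by
  rw [succToward, dif_pos h]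
  exact IsWF.min_mem _ _

theorem lt_succToward (h : t < s) : t < succToward t s := (succToward_mem h).1

theorem succToward_le (h : t < s) : succToward t s ≤ s := (succToward_mem h).2

theorem succToward_le_of_lt_of_le (htx : t < x) (hxs : x ≤ s) : succToward t s ≤ x := by
  have hts := htx.trans_le hxs
  have hmin : ¬x < succToward t s := by
    rw [succToward, dif_pos hts]
    exact IsWF.not_lt_min _ _ ⟨htx, hxs⟩
  rcases le_total_of_le hxs (succToward_le hts) with h | h
  · exact (h.eq_of_not_lt hmin).ge
  · exact h

theorem succToward_eq_of_lt_of_le (htx : t < x) (hxs : x ≤ s) : succToward t x = succToward t s :=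
  have hts := htx.trans_le hxs
  le_antisymm (succToward_le_of_lt_of_le (lt_succToward hts) (succToward_le_of_lt_of_le htx hxs))
    (succToward_le_of_lt_of_le (lt_succToward htx) ((succToward_le htx).trans hxs))

theorem succToward_ne_of_inf_lt {a b : T} (ha : a ⊓ b < a) (hb : a ⊓ b < b) :
    succToward (a ⊓ b) a ≠ succToward (a ⊓ b) b := fun h =>
  (lt_succToward ha).not_ge (le_inf (succToward_le ha) (h ▸ succToward_le hb))

end TreeOrder

section StreamPrefix

variable {α : Type*} {ρ ρ' : List α} {c c' : Stream' α}

def IsStreamPrefix (ρ : List α) (c : Stream' α) : Prop := c.take ρ.length = ρ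

theorem isStreamPrefix_nil (c : Stream' α) : IsStreamPrefix [] c := rfl

theorem IsStreamPrefix.of_prefix (h : ρ <+: ρ') (h' : IsStreamPrefix ρ' c) :
    IsStreamPrefix ρ c := by
  unfold IsStreamPrefix
  conv_rhs => rw [List.prefix_iff_eq_take.1 h, ← h', Stream'.take_take, min_eq_right h.length_le]

theorem IsStreamPrefix.concat_get (h : IsStreamPrefix ρ c) :
    IsStreamPrefix (ρ ++ [c.get ρ.length]) c := by
  rw [IsStreamPrefix, List.length_append, List.length_singleton, Stream'.take_succ', h]

theorem IsStreamPrefix.prefix_take {n : ℕ} (h : IsStreamPrefix ρ c) (hn : ρ.length ≤ n) :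
    ρ <+: c.take n :=
  h ▸ Stream'.take_prefix_take_left _ _ _ hn

theorem IsStreamPrefix.prefix_or_prefix (h : IsStreamPrefix ρ c) (h' : IsStreamPrefix ρ' c) :
    ρ <+: ρ' ∨ ρ' <+: ρ :=
  (le_total ρ.length ρ'.length).imp (fun hle => h'.symm ▸ h.prefix_take hle)
    (fun hle => h.symm ▸ h'.prefix_take hle)

theorem IsStreamPrefix.length_le_of_get_ne {n : ℕ} (h : IsStreamPrefix ρ c)
    (h' : IsStreamPrefix ρ c') (hn : c.get n ≠ c'.get n) : ρ.length ≤ n := by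
  by_contra! hlt
  have hc := Stream'.getElem?_take (s := c) hlt
  have hc' := Stream'.getElem?_take (s := c') hlt
  rw [h] at hc
  rw [h'] at hc'
  exact hn (Option.some_injective _ (hc.symm.trans hc'))

end StreamPrefix

theorem List.exists_greatest_prefix {α : Type*} {S : Set (List α)} (hS : S.Nonempty) (L : List α)
    (hL : ∀ ρ ∈ S, ρ <+: L) : ∃ ρ₀ ∈ S, ∀ ρ ∈ S, ρ <+: ρ₀ := by
  have hfin : S.Finite := L.inits.finite_toSet.subset fun ρ hρ => (List.mem_inits _ _).2 (hL ρ hρ)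
  obtain ⟨ρ₀, hρ₀, hmax⟩ := Set.exists_max_image S List.length hfin hS
  exact ⟨ρ₀, hρ₀, fun ρ hρ => List.prefix_of_prefix_length_le (hL ρ hρ) (hL ρ₀ hρ₀) (hmax ρ hρ)⟩

noncomputable abbrev SemilatticeInf.ofExistsGreatestLowerBound {α : Type*} [PartialOrder α]
    (h : ∀ x y : α, ∃ z ≤ x, z ≤ y ∧ ∀ w ≤ x, w ≤ y → w ≤ z) : SemilatticeInf α where
  inf x y := (h x y).choose
  inf_le_left x y := (h x y).choose_spec.1
  inf_le_right x y := (h x y).choose_spec.2.1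
  le_inf w x y := (h x y).choose_spec.2.2 w

/-- `⟨t, σ⟩` is the word `σ` in the copy of `ℕ^{<ω}` grafted above `t`; `⟨t, []⟩` is `t` itself. -/
@[ext]
structure Graft (T : Type u) (code : T → T → Stream' ℕ) where
  base : T
  word : List ℕ

namespace Graft

open TreeOrder Function

variable {T : Type u} [TreeOrder T] {code : T → T → Stream' ℕ}

instance : LE (Graft T code) where
  le x y := (x.base = y.base ∧ x.word <+: y.word) ∨
    (x.base < y.base ∧ IsStreamPrefix x.word (code x.base (succToward x.base y.base)))

variable {x y z : Graft T code}

theorem le_def : x ≤ y ↔ (x.base = y.base ∧ x.word <+: y.word) ∨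
    (x.base < y.base ∧ IsStreamPrefix x.word (code x.base (succToward x.base y.base))) :=
  Iff.rfl

theorem base_le_base (h : x ≤ y) : x.base ≤ y.base := by
  rcases h with ⟨h, -⟩ | ⟨h, -⟩
  exacts [h.le, h.le]

theorem mk_le_mk_iff_prefix {t : T} {ρ σ : List ℕ} :
    (⟨t, ρ⟩ : Graft T code) ≤ ⟨t, σ⟩ ↔ ρ <+: σ := by
  simp [le_def]

theorem mk_nil_le_mk {t t' : T} (h : t ≤ t') (σ : List ℕ) : (⟨t, []⟩ : Graft T code) ≤ ⟨t', σ⟩ := by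
  rcases h.eq_or_lt with rfl | h
  exacts [Or.inl ⟨rfl, List.nil_prefix⟩, Or.inr ⟨h, isStreamPrefix_nil _⟩]

theorem le_of_le_of_base_lt (hxz : x ≤ z) (hxy : x.base < y.base) (hyz : y.base ≤ z.base) :
    x ≤ y := by
  rcases hxz with ⟨hxz, -⟩ | ⟨-, hw⟩
  · exact absurd (hxz ▸ hxy.trans_le hyz) (lt_irrefl _)
  · exact Or.inr ⟨hxy, succToward_eq_of_lt_of_le hxy hyz ▸ hw⟩

instance : PartialOrder (Graft T code) where
  le_refl x := Or.inl ⟨rfl, List.prefix_refl _⟩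
  le_trans x y z hxy hyz := by
    rcases hxy with ⟨hb, hw⟩ | ⟨hb, hw⟩
    · rcases hyz with ⟨hb', hw'⟩ | ⟨hb', hw'⟩
      · exact Or.inl ⟨hb.trans hb', hw.trans hw'⟩
      · exact Or.inr ⟨hb ▸ hb', hb ▸ hw'.of_prefix hw⟩
    · rcases hyz with ⟨hb', hw'⟩ | ⟨hb', hw'⟩
      · exact Or.inr ⟨hb' ▸ hb, hb' ▸ hw⟩
      · exact Or.inr ⟨hb.trans hb', succToward_eq_of_lt_of_le hb hb'.le ▸ hw⟩
  le_antisymm := by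
    rintro ⟨t, σ⟩ ⟨t', σ'⟩ hxy hyx
    rcases hxy with ⟨rfl, hw⟩ | ⟨hb, -⟩
    · exact congrArg _ (hw.eq_of_length_le ((mk_le_mk_iff_prefix.1 hyx).length_le))
    · exact absurd (base_le_base hyx) hb.not_ge

theorem lt_cases (h : x < y) :
    (x.base = y.base ∧ x.word <+: y.word ∧ x.word.length < y.word.length) ∨
      (x.base < y.base ∧ IsStreamPrefix x.word (code x.base (succToward x.base y.base))) := by
  rcases h.le with ⟨hb, hw⟩ | hlt
  · refine Or.inl ⟨hb, hw, hw.length_le.lt_of_ne fun hlen => h.ne ?_⟩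
    exact Graft.ext hb (hw.eq_of_length hlen)
  · exact Or.inr hlt

theorem word_prefix_or_prefix (hb : x.base = y.base) (hx : x ≤ z) (hy : y ≤ z) :
    x.word <+: y.word ∨ y.word <+: x.word := by
  rcases hx with ⟨hxz, hx⟩ | ⟨hxz, hx⟩ <;> rcases hy with ⟨hyz, hy⟩ | ⟨hyz, hy⟩
  · exact List.prefix_or_prefix_of_prefix hx hy
  · exact absurd (hb ▸ hxz) hyz.ne
  · exact absurd (hb ▸ hyz.symm) hxz.ne'
  · exact hx.prefix_or_prefix (hb ▸ hy)

theorem le_total_of_le (hx : x ≤ z) (hy : y ≤ z) : x ≤ y ∨ y ≤ x := by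
  rcases eq_or_ne x.base y.base with hb | hb
  · exact (word_prefix_or_prefix hb hx hy).imp (fun h => Or.inl ⟨hb, h⟩)
      (fun h => Or.inl ⟨hb.symm, h⟩)
  rcases TreeOrder.le_total_of_le (base_le_base hx) (base_le_base hy) with h | h
  · exact Or.inl (le_of_le_of_base_lt hx (h.lt_of_ne hb) (base_le_base hy))
  · exact Or.inr (le_of_le_of_base_lt hy (h.lt_of_ne hb.symm) (base_le_base hx))

theorem isWF_Iio (z : Graft T code) : (Iio z).IsWF := by
  have hbase : (Iio z).WellFoundedOn ((· < ·) on base) :=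
    wellFoundedOn_image.1 <|
      (isWF_Iic z.base).mono (image_subset_iff.2 fun x hx => base_le_base hx.le)
  have hlex := hbase.prod_lex_of_wellFoundedOn_fiber (rβ := (· < ·)) (g := fun x => x.word.length)
    fun _ => (wellFounded_lt.onFun).wellFoundedOn
  refine hlex.mono' fun x _ y _ hxy => ?_
  rcases lt_cases hxy with ⟨hb, -, hlen⟩ | ⟨hb, -⟩
  · change Prod.Lex _ _ (x.base, _) (y.base, _)
    exact hb ▸ Prod.Lex.right _ hlen
  · exact Prod.Lex.left _ _ hb

theorem exists_greatest_lowerBound (hcode : ∀ t, Injective (code t)) (x y : Graft T code) :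
    ∃ z ≤ x, z ≤ y ∧ ∀ w ≤ x, w ≤ y → w ≤ z := by
  set m := x.base ⊓ y.base
  set S : Set (List ℕ) := {ρ | (⟨m, ρ⟩ : Graft T code) ≤ x ∧ (⟨m, ρ⟩ : Graft T code) ≤ y}
  have hS : [] ∈ S := ⟨mk_nil_le_mk inf_le_left _, mk_nil_le_mk inf_le_right _⟩
  have hbound : ∃ L, ∀ ρ ∈ S, ρ <+: L := by
    rcases (inf_le_left : m ≤ x.base).eq_or_lt with hx | hx
    · exact ⟨x.word, fun ρ hρ => (hρ.1.resolve_right fun h => h.1.ne hx).2⟩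
    rcases (inf_le_right : m ≤ y.base).eq_or_lt with hy | hy
    · exact ⟨y.word, fun ρ hρ => (hρ.2.resolve_right fun h => h.1.ne hy).2⟩
    obtain ⟨N, hN⟩ := Function.ne_iff.1 ((hcode m).ne (succToward_ne_of_inf_lt hx hy))
    refine ⟨(code m (succToward m x.base)).take N, fun ρ hρ => ?_⟩
    have h1 := (hρ.1.resolve_left fun h => hx.ne h.1).2
    have h2 := (hρ.2.resolve_left fun h => hy.ne h.1).2
    exact h1.prefix_take (h1.length_le_of_get_ne h2 hN)
  obtain ⟨L, hL⟩ := hbound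
  obtain ⟨ρ₀, ⟨hρ₀x, hρ₀y⟩, hρ₀⟩ := List.exists_greatest_prefix ⟨_, hS⟩ L hL
  refine ⟨⟨m, ρ₀⟩, hρ₀x, hρ₀y, ?_⟩
  rintro ⟨t, σ⟩ hwx hwy
  rcases (le_inf (base_le_base hwx) (base_le_base hwy)).eq_or_lt with rfl | hw
  · exact mk_le_mk_iff_prefix.2 (hρ₀ σ ⟨hwx, hwy⟩)
  · exact le_of_le_of_base_lt hwx hw inf_le_left

theorem countable_covBy (x : Graft T code) : {y | x ⋖ y}.Countable := by
  refine (countable_range fun n : ℕ => (⟨x.base, x.word ++ [n]⟩ : Graft T code)).mono ?_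
  intro y hxy
  rcases lt_cases hxy.lt with ⟨hb, hw, hlen⟩ | ⟨hb, hw⟩
  · have hstep : x.word ++ [y.word[x.word.length]] <+: y.word := by
      have h := List.take_succ_eq_append_getElem hlen
      rw [← List.prefix_iff_eq_take.1 hw] at h
      exact h ▸ List.take_prefix _ _
    rcases hxy.eq_or_eq (c := ⟨x.base, x.word ++ [y.word[x.word.length]]⟩)
      (Or.inl ⟨rfl, List.prefix_append _ _⟩) (Or.inl ⟨hb, hstep⟩) with h | h
    · simpa using congrArg (·.word.length) h
    · exact ⟨_, h⟩
  · rcases hxy.eq_or_eq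
      (c := ⟨x.base, x.word ++ [(code x.base (succToward x.base y.base)).get x.word.length]⟩)
      (Or.inl ⟨rfl, List.prefix_append _ _⟩) (Or.inr ⟨hb, hw.concat_get⟩) with h | h
    · simpa using congrArg (·.word.length) h
    · exact absurd (congrArg base h) hb.ne

noncomputable abbrev treeOrder (hcode : ∀ t, Injective (code t)) : TreeOrder (Graft T code) :=
  { SemilatticeInf.ofExistsGreatestLowerBound (exists_greatest_lowerBound hcode) with
    bot := ⟨⊥, []⟩
    bot_le := fun x => mk_nil_le_mk bot_le x.word
    chain_lt := fun _ _ hx _ hy _ => le_total_of_le hx.le hy.le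
    isWF_lt := isWF_Iio }

def embedding : T ↪o Graft T code :=
  OrderEmbedding.ofMapLEIff (fun t => ⟨t, []⟩) fun _ _ => ⟨base_le_base, fun h => mk_nil_le_mk h []⟩

end Graft

section RealValued

open Function TreeOrder

noncomputable def gapIndex (a b : ℝ) : ℕ := ⌈(b - a)⁻¹⌉₊

theorem inv_gapIndex_add_one_le {a b : ℝ} (h : a < b) : ((gapIndex a b : ℝ) + 1)⁻¹ ≤ b - a :=
  inv_le_of_inv_le₀ (sub_pos.2 h) ((Nat.le_ceil _).trans (le_add_of_nonneg_right zero_le_one))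

noncomputable def wordValue (σ : List ℕ) : ℝ := (1 - 2⁻¹ ^ σ.length) / (σ.headD 0 + 1)

theorem wordValue_nonneg (σ : List ℕ) : 0 ≤ wordValue σ :=
  div_nonneg (sub_nonneg.2 (pow_le_one₀ (by norm_num) (by norm_num))) (by positivity)

theorem wordValue_lt_of_prefix {σ σ' : List ℕ} (h : σ <+: σ') (hlen : σ.length < σ'.length) :
    wordValue σ < wordValue σ' := by
  have hpow : (2⁻¹ : ℝ) ^ σ'.length < 2⁻¹ ^ σ.length :=
    pow_lt_pow_right_of_lt_one₀ (by norm_num) (by norm_num) hlen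
  rcases σ with _ | ⟨a, τ⟩
  · simp only [wordValue, List.length_nil, pow_zero, sub_self, zero_div] at hpow ⊢
    exact div_pos (by linarith) (by positivity)
  · obtain ⟨τ', rfl⟩ : ∃ τ', σ' = a :: τ' := by
      obtain ⟨u, rfl⟩ := h
      exact ⟨τ ++ u, rfl⟩
    exact div_lt_div_of_pos_right (by linarith) (by positivity)

theorem IsStreamPrefix.wordValue_lt {σ : List ℕ} {c : Stream' ℕ} (h : IsStreamPrefix σ c) :
    wordValue σ < ((c.head : ℝ) + 1)⁻¹ := by
  rcases σ with _ | ⟨a, τ⟩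
  · simp only [wordValue, List.length_nil, pow_zero, sub_self, zero_div]
    positivity
  · have ha : c.head = a := (List.cons.inj h).1
    rw [wordValue, ha, List.headD_cons, div_eq_mul_inv]
    exact mul_lt_of_lt_one_left (by positivity) (sub_lt_self _ (by positivity))

variable {T : Type u}

noncomputable def realCode (f : T → ℝ) (ι : T → Stream' ℕ) (t s : T) : Stream' ℕ :=
  Stream'.cons (gapIndex (f t) (f s)) (ι s)

theorem realCode_injective (f : T → ℝ) {ι : T → Stream' ℕ} (hι : Injective ι) (t : T) :
    Injective (realCode f ι t) := fun _ _ h => hι (congrArg Stream'.tail h)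

theorem Graft.strictMono_base_add_wordValue [TreeOrder T] {f : T → ℝ} (hf : StrictMono f)
    (ι : T → Stream' ℕ) :
    StrictMono fun x : Graft T (realCode f ι) => f x.base + wordValue x.word := by
  intro x y hxy
  dsimp only
  rcases Graft.lt_cases hxy with ⟨hb, hw, hlen⟩ | ⟨hb, hw⟩
  · rw [hb]
    exact add_lt_add_right (wordValue_lt_of_prefix hw hlen) _
  · calc f x.base + wordValue x.word
        < f x.base + ((gapIndex (f x.base) (f (succToward x.base y.base)) : ℝ) + 1)⁻¹ :=
          add_lt_add_right hw.wordValue_lt _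
      _ ≤ f (succToward x.base y.base) := by
          linarith [inv_gapIndex_add_one_le (hf (lt_succToward hb))]
      _ ≤ f y.base := hf.monotone (succToward_le hb)
      _ ≤ f y.base + wordValue y.word := le_add_of_nonneg_right (wordValue_nonneg _)

end RealValued

/-- Every ℝ-embeddable tree of cardinality at most the continuum, with a strictly
order-preserving map `f` to `ℝ`, embeds into a countably branching tree `T'` in such
a way that `f` extends to a strictly order-preserving `f' : T' → ℝ`. -/
theorem exists_countablyBranching_extension {T : Type u} [TreeOrder T]
    (hT : Cardinal.mk T ≤ Cardinal.continuum.{u}) (f : T → ℝ) (hf : StrictMono f) :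
    ∃ (T' : Type u) (_ : TreeOrder T') (e : T ↪o T') (f' : T' → ℝ),
      (∀ t : T', {s : T' | t ⋖ s}.Countable) ∧ StrictMono f' ∧ ∀ t : T, f' (e t) = f t := by
  obtain ⟨ι⟩ : Nonempty (T ↪ Stream' ℕ) := by
    rw [← Cardinal.lift_mk_le', Stream', Cardinal.mk_arrow, Cardinal.mk_nat, Cardinal.lift_aleph0,
      Cardinal.aleph0_power_aleph0, Cardinal.lift_continuum, Cardinal.lift_uzero]
    exact hT
  exact ⟨Graft T (realCode f ι), Graft.treeOrder (realCode_injective f ι.injective),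
    Graft.embedding, fun x => f x.base + wordValue x.word, Graft.countable_covBy,
    Graft.strictMono_base_add_wordValue hf ι, fun t => by simp [Graft.embedding, wordValue]⟩
end

section
/- There is no strictly order-preserving function from the tree σQ into the rationals Q; that is, σQ is not Q-embeddable (not special). -/
/-!
Kurepa's diagonal argument. Let `f : σℚ → ℚ` be strictly increasing and enumerate `ℚ` as
`q₀, q₁, …`. Build a chain `s₀ ⊑ s₁ ⊑ ⋯` in `σℚ` and rationals `x₀ ≥ x₁ ≥ ⋯` such that each `sₙ`
is bounded by some `b < xₙ`. At stage `n`, if some extension `t ⊒ sₙ` bounded strictly below some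
`c < xₙ` has `f t = qₙ`, pass to `t ∪ {c}`: every later extension then strictly extends `t`, so its
`f`-value exceeds `qₙ`. Otherwise keep `sₙ` and lower `xₙ` strictly, so that no extension of `sₙ`
bounded by the new `x` takes the value `qₙ`. The union of the chain lies in `σℚ`, extends every `sₙ`
and is bounded by every `xₙ`, so its `f`-value is none of the `qₙ`.
-/

open Filter Topology Set

universe u v

/-- `s` is an initial segment of `t` (as subsets of `ℚ`): `s ⊆ t` and every element
of `t \ s` lies above every element of `s`. -/
def QInitSeg (s t : Set ℚ) : Prop :=
  s ⊆ t ∧ ∀ x ∈ s, ∀ y ∈ t, y ∉ s → x ≤ y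

theorem QInitSeg.refl (s : Set ℚ) : QInitSeg s s :=
  ⟨subset_rfl, fun _ _ y hy hyn => absurd hy hyn⟩

theorem QInitSeg.trans' {s t u : Set ℚ} (h1 : QInitSeg s t) (h2 : QInitSeg t u) :
    QInitSeg s u := by
  refine ⟨h1.1.trans h2.1, fun x hx y hy hyn => ?_⟩
  by_cases hyt : y ∈ t
  · exact h1.2 x hx y hyt hyn
  · exact h2.2 x (h1.1 hx) y hy hyt

theorem QInitSeg.antisymm' {s t : Set ℚ} (h1 : QInitSeg s t) (h2 : QInitSeg t s) : s = t :=
  Set.Subset.antisymm h1.1 h2.1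

/-- The tree `σℚ` of all bounded well-ordered subsets of `ℚ`. -/
def sigmaQ : Type := {s : Set ℚ // s.IsWF ∧ BddAbove s}

/-- `σℚ` is ordered by "being an initial segment". -/
instance : PartialOrder sigmaQ where
  le s t := QInitSeg s.1 t.1
  le_refl s := QInitSeg.refl s.1
  le_trans _ _ _ h1 h2 := QInitSeg.trans' h1 h2
  le_antisymm _ _ h1 h2 := Subtype.ext (QInitSeg.antisymm' h1 h2)

theorem QInitSeg.mem_of_le {s t : Set ℚ} (h : QInitSeg s t) {x y : ℚ} (hx : x ∈ s) (hy : y ∈ t)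
    (hyx : y ≤ x) : y ∈ s := by
  by_contra hys
  exact hys (le_antisymm hyx (h.2 x hx y hy hys) ▸ hx)

namespace sigmaQ

theorem subset_of_le {s t : sigmaQ} (h : s ≤ t) : s.1 ⊆ t.1 := h.1

theorem exists_iUnion_of_directed {ι : Type*} {c : ι → sigmaQ} (hc : Directed (· ≤ ·) c)
    (hbdd : BddAbove (⋃ i, (c i).1)) : ∃ T : sigmaQ, T.1 = ⋃ i, (c i).1 ∧ ∀ i, c i ≤ T := by
  have mem_of_le : ∀ {i j x y}, x ∈ (c i).1 → y ∈ (c j).1 → y ≤ x → y ∈ (c i).1 := by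
    intro i j x y hx hy hyx
    obtain ⟨k, hik, hjk⟩ := hc i j
    exact QInitSeg.mem_of_le hik hx (subset_of_le hjk hy) hyx
  have hwf : (⋃ i, (c i).1).IsWF := by
    refine isWF_iff_no_descending_seq.2 fun g hg hmem => ?_
    obtain ⟨i, hi⟩ := mem_iUnion.1 (hmem 0)
    have hgi : ∀ n, g n ∈ (c i).1 := fun n =>
      have ⟨_, hj⟩ := mem_iUnion.1 (hmem n)
      mem_of_le hi hj (hg.antitone n.zero_le)
    exact isWF_iff_no_descending_seq.1 (c i).2.1 g hg hgi
  refine ⟨⟨_, hwf, hbdd⟩, rfl, fun i => ⟨subset_iUnion (fun i => (c i).1) i, ?_⟩⟩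
  intro x hx y hy hyi
  obtain ⟨j, hj⟩ := mem_iUnion.1 hy
  exact le_of_not_gt fun hyx => hyi (mem_of_le hx hj hyx.le)

def insert (c : ℚ) (t : sigmaQ) : sigmaQ :=
  ⟨Insert.insert c t.1, t.2.1.insert c, t.2.2.insert c⟩

theorem lt_insert {c : ℚ} {t : sigmaQ} (hc : t.1 ⊆ Iio c) : t < t.insert c := by
  refine lt_of_le_of_ne ⟨subset_insert c t.1, fun x hx y hy hyt => ?_⟩ fun h => ?_
  · obtain rfl := eq_of_mem_insert_of_notMem hy hyt
    exact (hc hx).le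
  · have hct : c ∈ t.1 := h ▸ mem_insert c t.1
    exact lt_irrefl c (hc hct)

theorem insert_subset_Iic {c : ℚ} {t : sigmaQ} (hc : t.1 ⊆ Iio c) : (t.insert c).1 ⊆ Iic c :=
  insert_subset self_mem_Iic (hc.trans Iio_subset_Iic_self)

structure Stage where
  s : sigmaQ
  x : ℚ
  exists_bound : ∃ b < x, s.1 ⊆ Iic b

theorem Stage.exists_avoiding {f : sigmaQ → ℚ} (hf : StrictMono f) (q : ℚ) (p : Stage) :
    ∃ p' : Stage, p.s ≤ p'.s ∧ p'.x ≤ p.x ∧ ∀ u ≥ p'.s, u.1 ⊆ Iio p'.x → f u ≠ q := by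
  by_cases h : ∃ t ≥ p.s, ∃ c < p.x, t.1 ⊆ Iio c ∧ f t = q
  · obtain ⟨t, hst, c, hcx, htc, hft⟩ := h
    have ht : t < t.insert c := lt_insert htc
    refine ⟨⟨t.insert c, p.x, c, hcx, insert_subset_Iic htc⟩, hst.trans ht.le, le_rfl,
      fun u hu _ => ?_⟩
    exact (hft ▸ hf (ht.trans_le hu)).ne'
  · obtain ⟨b, hbx, hsb⟩ := p.exists_bound
    refine ⟨⟨p.s, (b + p.x) / 2, b, by linarith, hsb⟩, le_rfl,
      show (b + p.x) / 2 ≤ p.x by linarith, fun u hu hux hfu => h ⟨u, hu, _, by linarith, hux, hfu⟩⟩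

theorem exists_stages_avoiding {f : sigmaQ → ℚ} (hf : StrictMono f) (q : ℕ → ℚ) :
    ∃ p : ℕ → Stage, Monotone (fun n => (p n).s) ∧ Antitone (fun n => (p n).x) ∧
      ∀ n, ∀ u ≥ (p (n + 1)).s, u.1 ⊆ Iio (p (n + 1)).x → f u ≠ q n := by
  choose next hs hx havoid using Stage.exists_avoiding hf
  let p₀ : Stage := ⟨⟨∅, isWF_empty, bddAbove_empty⟩, 1, 0, zero_lt_one, empty_subset _⟩
  let p : ℕ → Stage := fun n => Nat.rec p₀ (fun n p => next (q n) p) n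
  exact ⟨p, monotone_nat_of_le_succ fun n => hs _ _, antitone_nat_of_succ_le fun n => hx _ _,
    fun n => havoid _ _⟩

theorem iUnion_subset_Iio {p : ℕ → Stage} (hs : Monotone fun n => (p n).s)
    (hx : Antitone fun n => (p n).x) (n : ℕ) : ⋃ m, (p m).s.1 ⊆ Iio (p n).x := by
  refine iUnion_subset fun m y hy => ?_
  obtain ⟨b, hbx, hb⟩ := (p (max m n)).exists_bound
  calc y ≤ b := hb (subset_of_le (hs (le_max_left m n)) hy)
    _ < (p (max m n)).x := hbx
    _ ≤ (p n).x := hx (le_max_right m n)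

end sigmaQ

/-- Kurepa's theorem: the tree `σℚ` is not `ℚ`-embeddable (not special): there is no
strictly order-preserving map from `σℚ` to `ℚ`. -/
theorem sigmaQ_not_special : ¬ ∃ f : sigmaQ → ℚ, StrictMono f := by
  rintro ⟨f, hf⟩
  obtain ⟨q, hq⟩ := exists_surjective_nat ℚ
  obtain ⟨p, hs, hx, havoid⟩ := sigmaQ.exists_stages_avoiding hf q
  have hlt := sigmaQ.iUnion_subset_Iio hs hx
  obtain ⟨T, hT, hle⟩ :=
    sigmaQ.exists_iUnion_of_directed hs.directed_le ⟨(p 0).x, fun y hy => (hlt 0 hy).le⟩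
  obtain ⟨n, hn⟩ := hq (f T)
  exact havoid n T (hle _) (hT ▸ hlt _) hn.symm
end

section
/- The one-point compactification A(wQ) of the tree wQ of all well-ordered subsets of the rationals is Rosenthal compact; in fact, setting A_t = {x ∈ P(Q) : t is an initial segment of x} for t ∈ wQ, the family {A_t : t ∈ wQ} is a proper tree of sets whose members are simultaneously F_σ and G_δ subsets of the Cantor set P(Q), so that A(wQ) is homeomorphic to {1_{A_t} : t ∈ wQ} ∪ {0} ⊆ B₁(P(Q)). -/
open Filter Topology Set

universe u v

/-- A tree of sets indexed by a tree `T`. -/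
structure IsTreeOfSets {T : Type u} [PartialOrder T] {X : Type v} (A : T → Set X) : Prop where
  subset_of_le : ∀ s t : T, t ≤ s → A s ⊆ A t
  disjoint_of_incomp : ∀ s t : T, ¬ s ≤ t → ¬ t ≤ s → A s ∩ A t = ∅
  iInter_chain : ∀ C : Set T, C.Nonempty → IsChain (· ≤ ·) C → ∀ t : T, IsLUB C t →
    ⋂ s ∈ C, A s = A t
  iInter_unbounded : ∀ C : Set T, C.Nonempty → IsChain (· ≤ ·) C → ¬ BddAbove C →
    ⋂ s ∈ C, A s = ∅

/-- A proper tree of sets: all members are nonempty and pairwise distinct. -/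
def IsProperTreeOfSets {T : Type u} [PartialOrder T] {X : Type v} (A : T → Set X) : Prop :=
  IsTreeOfSets A ∧ (∀ t : T, (A t).Nonempty) ∧ Function.Injective A

/-- The tree `wℚ` of all well-ordered subsets of `ℚ`. -/
def wQ : Type := {s : Set ℚ // s.IsWF}

/-- `wℚ` is ordered by "being an initial segment". -/
instance : PartialOrder wQ where
  le s t := QInitSeg s.1 t.1
  le_refl s := QInitSeg.refl s.1
  le_trans _ _ _ h1 h2 := QInitSeg.trans' h1 h2
  le_antisymm _ _ h1 h2 := Subtype.ext (QInitSeg.antisymm' h1 h2)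

instance : TopologicalSpace wQ := intervalTopology wQ

/-- The set `A_t = {x ⊆ ℚ : t is an initial segment of x}`, as a subset of the Cantor
set `2^ℚ`. -/
def wqSets (t : wQ) : Set (ℚ → Bool) := {x : ℚ → Bool | QInitSeg t.1 {q : ℚ | x q = true}}

/-- The characteristic function `1_{A_t}` of `A_t`, a real function on the Cantor set. -/
noncomputable def wqChar (t : wQ) : (ℚ → Bool) → ℝ := (wqSets t).indicator fun _ => (1 : ℝ)

/-! For `x ∈ 2^ℚ` the `t ∈ wℚ` with `x ∈ A_t` are exactly the initial segments of the longest
well-ordered initial segment `m` of `x`, so `{t | x ∈ A_t}` is the branch `Iic m`; the tree-of-sets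
axioms follow at once. Since `wℚ` is well-founded, every `Iic m` is compact, and it is also clopen
in the interval topology. Hence `t ↦ 1_{A_t}(x)` is continuous and vanishes off a closed compact
set, so `t ↦ 1_{A_t}` extends continuously to `A(wℚ)` with `∞ ↦ 0`; being injective on a compact
space, the extension is a homeomorphism onto its image. Each `A_t` is closed in `2^ℚ`, so its
indicator is a pointwise limit of thickened indicators. -/

open OnePoint

section TreeOfSets

variable {T X : Type*} [PartialOrder T]

theorem isTreeOfSets_of_mem_iff (hT : ∀ t : T, IsChain (· ≤ ·) (Iic t)) {A : T → Set X}
    {top : X → T} (hA : ∀ t x, x ∈ A t ↔ t ≤ top x) : IsTreeOfSets A where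
  subset_of_le s t hts x hx := (hA t x).2 (hts.trans ((hA s x).1 hx))
  disjoint_of_incomp s t hst hts := by
    refine eq_empty_of_forall_notMem fun x ⟨hs, ht⟩ => ?_
    rcases (hT (top x)).total ((hA s x).1 hs) ((hA t x).1 ht) with h | h
    exacts [hst h, hts h]
  iInter_chain C _ _ t ht := by
    ext x
    simp only [mem_iInter₂, hA]
    exact ⟨fun h => ht.2 h, fun h s hs => (ht.1 hs).trans h⟩
  iInter_unbounded C _ _ hC := by
    refine eq_empty_of_forall_notMem fun x hx => hC ⟨top x, fun s hs => ?_⟩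
    exact (hA s x).1 (mem_iInter₂.1 hx s hs)

theorem isProperTreeOfSets_of_mem_iff (hT : ∀ t : T, IsChain (· ≤ ·) (Iic t)) {A : T → Set X}
    {top : X → T} (htop : Function.Surjective top) (hA : ∀ t x, x ∈ A t ↔ t ≤ top x) :
    IsProperTreeOfSets A := by
  have hmem : ∀ t, ∃ x ∈ A t, top x = t := fun t =>
    let ⟨x, hx⟩ := htop t
    ⟨x, (hA t x).2 hx.ge, hx⟩
  refine ⟨isTreeOfSets_of_mem_iff hT hA, fun t => (hmem t).imp fun x hx => hx.1, ?_⟩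
  intro s t hst
  obtain ⟨x, hxs, rfl⟩ := hmem s
  obtain ⟨y, hyt, rfl⟩ := hmem t
  exact le_antisymm ((hA _ y).1 (hst ▸ hyt)) ((hA _ x).1 (hst ▸ hxs))

end TreeOfSets

section IntervalTopology

variable {T : Type*}

theorem isOpen_intervalTopology_of_isLowerSet [Preorder T] {s : Set T} (hs : IsLowerSet s) :
    IsOpen[intervalTopology T] s := by
  let := intervalTopology T
  have hs_eq : s = ⋃ t ∈ s, Iic t := Subset.antisymm (fun t ht => mem_biUnion ht le_rfl)
    (iUnion₂_subset fun t ht => hs.Iic_subset ht)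
  rw [hs_eq]
  exact isOpen_biUnion fun t _ => TopologicalSpace.isOpen_generateFrom_of_mem (Or.inr ⟨t, rfl⟩)

theorem isOpen_intervalTopology_Ioc [Preorder T] (a b : T) :
    IsOpen[intervalTopology T] (Ioc a b) :=
  TopologicalSpace.isOpen_generateFrom_of_mem (Or.inl ⟨a, b, rfl⟩)

/-- An ultrafilter containing `Iic t` converges to the least `s ≤ t` with `Iic s` in the
ultrafilter. -/
theorem isCompact_Iic_intervalTopology [PartialOrder T] [WellFoundedLT T]
    (hT : ∀ t : T, IsChain (· ≤ ·) (Iic t)) (t : T) :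
    @IsCompact T (intervalTopology T) (Iic t) := by
  let := intervalTopology T
  refine isCompact_iff_ultrafilter_le_nhds.2 fun F hF => ?_
  obtain ⟨s, ⟨hst, hsF⟩, hmin⟩ := wellFounded_lt.has_min {s | s ≤ t ∧ Iic s ∈ F}
    ⟨t, le_rfl, le_principal_iff.1 hF⟩
  refine ⟨s, hst, ?_⟩
  rw [show 𝓝 s = _ from TopologicalSpace.nhds_generateFrom]
  refine le_iInf₂ fun S ⟨hsS, hS⟩ => le_principal_iff.2 ?_
  rcases hS with ⟨a, b, rfl⟩ | ⟨b, rfl⟩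
  · have haF : (Iic a)ᶜ ∈ F :=
      Ultrafilter.compl_mem_iff_notMem.2 fun ha => hmin a ⟨hsS.1.le.trans hst, ha⟩ hsS.1
    refine mem_of_superset (inter_mem hsF haF) fun u ⟨hus, hua⟩ => ⟨?_, hus.trans hsS.2⟩
    rcases (hT s).total hus hsS.1.le with h | h
    exacts [absurd h hua, lt_of_le_not_ge h hua]
  · exact mem_of_superset hsF fun u hu => le_trans hu hsS

end IntervalTopology

section OnePointRange

variable {X Y : Type*} {f : X → Y} {y : Y}

def OnePoint.toRangeUnion (f : X → Y) (y : Y) (p : OnePoint X) : ↥(range f ∪ {y}) :=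
  ⟨p.elim y f, by induction p using OnePoint.rec <;> simp⟩

theorem OnePoint.toRangeUnion_bijective (hf : Function.Injective f) (hy : y ∉ range f) :
    Function.Bijective (toRangeUnion f y) := by
  refine ⟨fun p p' h => ?_, ?_⟩
  · have h' : p.elim y f = p'.elim y f := congrArg Subtype.val h
    induction p using OnePoint.rec <;> induction p' using OnePoint.rec
    · rfl
    · exact absurd ⟨_, h'.symm⟩ hy
    · exact absurd ⟨_, h'⟩ hy
    · exact congrArg _ (hf h')
  · rintro ⟨z, ⟨x, rfl⟩ | rfl⟩
    exacts [⟨x, rfl⟩, ⟨∞, rfl⟩]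

noncomputable def OnePoint.homeomorphRangeUnion [TopologicalSpace X] [TopologicalSpace Y]
    [T2Space Y] (hf : Continuous f) (hinj : Function.Injective f) (hy : y ∉ range f)
    (hlim : Tendsto f (coclosedCompact X) (𝓝 y)) :
    OnePoint X ≃ₜ ↥(range f ∪ {y}) :=
  (show Continuous (Equiv.ofBijective _ (toRangeUnion_bijective hinj hy)) from
    (continuousMapMk ⟨f, hf⟩ y hlim).continuous.subtype_mk _).homeoOfEquivCompactToT2

end OnePointRange

section BaireClassOne

variable {P : Type*} [TopologicalSpace P]

theorem baireClassOne_const (c : ℝ) : BaireClassOne fun _ : P => c :=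
  ⟨fun _ _ => c, fun _ => continuous_const, fun _ => tendsto_const_nhds⟩

theorem IsClosed.baireClassOne_indicator [TopologicalSpace.PseudoMetrizableSpace P] {F : Set P}
    (hF : IsClosed F) : BaireClassOne (F.indicator fun _ => (1 : ℝ)) := by
  let := TopologicalSpace.pseudoMetrizableSpacePseudoMetric P
  have hδ : ∀ n : ℕ, (0 : ℝ) < 1 / (n + 1) := fun n => Nat.one_div_pos_of_nat
  refine ⟨fun n x => thickenedIndicator (hδ n) F x,
    fun n => NNReal.continuous_coe.comp (thickenedIndicator (hδ n) F).continuous, fun x => ?_⟩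
  have h := tendsto_pi_nhds.1
    (thickenedIndicator_tendsto_indicator_closure hδ tendsto_one_div_add_atTop_nhds_zero_nat F) x
  rw [hF.closure_eq] at h
  simpa only [NNReal.coe_indicator, NNReal.coe_one, Function.comp_def] using
    (NNReal.continuous_coe.tendsto _).comp h

end BaireClassOne

instance : PolishSpace (ℚ → Bool) := {}

theorem Set.isWF_sep_isWF_inter_Iic {α : Type*} [Preorder α] (X : Set α) :
    {q ∈ X | (X ∩ Iic q).IsWF}.IsWF :=
  isWF_iff_no_descending_seq.2 fun f hf hmem =>
    isWF_iff_no_descending_seq.1 (hmem 0).2 f hf fun n => ⟨(hmem n).1, hf.antitone (Nat.zero_le n)⟩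

theorem QInitSeg.total {s t X : Set ℚ} (hs : QInitSeg s X) (ht : QInitSeg t X) :
    QInitSeg s t ∨ QInitSeg t s := by
  by_cases hst : s ⊆ t
  · exact Or.inl ⟨hst, fun a ha y hy hys => hs.2 a ha y (ht.1 hy) hys⟩
  obtain ⟨a, has, hat⟩ := not_subset.1 hst
  have hts : t ⊆ s := fun b hbt => by
    by_contra hbs
    exact hat (le_antisymm (hs.2 a has b (ht.1 hbt) hbs) (ht.2 b hbt a (hs.1 has) hat) ▸ hbt)
  exact Or.inr ⟨hts, fun b hb y hy hyt => ht.2 b hb y (hs.1 hy) hyt⟩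

theorem QInitSeg.sep_lt (t : Set ℚ) (q : ℚ) : QInitSeg {r ∈ t | r < q} t :=
  ⟨sep_subset _ _, fun _ ha _ hy hyq => (ha.2.trans_le (not_lt.1 fun h => hyq ⟨hy, h⟩)).le⟩

namespace wQ

theorem isChain_Iic (t : wQ) : IsChain (· ≤ ·) (Iic t) :=
  fun _ hs _ hu _ => QInitSeg.total hs hu

theorem exists_mem_diff_of_lt {s t : wQ} (h : s < t) : ∃ q ∈ t.1, q ∉ s.1 :=
  not_subset.1 fun hts => h.ne (Subtype.ext (h.le.1.antisymm hts))

instance : WellFoundedLT wQ := by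
  refine ⟨wellFounded_iff_isEmpty_descending_chain.2 ⟨fun ⟨f, hf⟩ => ?_⟩⟩
  choose q hq hq' using fun n => exists_mem_diff_of_lt (hf n)
  have hq_anti : StrictAnti q := strictAnti_nat_of_succ_lt fun n =>
    lt_of_le_of_ne ((hf n).le.2 _ (hq (n + 1)) _ (hq n) (hq' n)) fun h => hq' n (h ▸ hq (n + 1))
  have hf_le : ∀ n, f n ≤ f 0 := fun n => antitone_nat_of_succ_le (fun n => (hf n).le) n.zero_le
  exact isWF_iff_no_descending_seq.1 (f 0).2 q hq_anti fun n => (hf_le n).1 (hq n)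

/-- The longest well-ordered initial segment of `X`. -/
def maxInitSeg (X : Set ℚ) : wQ := ⟨{q ∈ X | (X ∩ Iic q).IsWF}, X.isWF_sep_isWF_inter_Iic⟩

theorem qInitSeg_maxInitSeg (X : Set ℚ) : QInitSeg (maxInitSeg X).1 X := by
  refine ⟨sep_subset _ _, fun a ha y hyX hy => not_lt.1 fun hya => hy ⟨hyX, ?_⟩⟩
  exact ha.2.mono (inter_subset_inter_right _ (Iic_subset_Iic.2 hya.le))

theorem le_maxInitSeg_iff {t : wQ} {X : Set ℚ} : t ≤ maxInitSeg X ↔ QInitSeg t.1 X := by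
  refine ⟨fun h => QInitSeg.trans' h (qInitSeg_maxInitSeg X), fun h => ⟨fun q hq => ?_, ?_⟩⟩
  · refine ⟨h.1 hq, t.2.mono fun y ⟨hyX, hyq⟩ => ?_⟩
    by_contra hy
    exact hy (le_antisymm hyq (h.2 q hq y hyX hy) ▸ hq)
  · exact fun a ha y hy hyt => h.2 a ha y hy.1 hyt

theorem maxInitSeg_coe (t : wQ) : maxInitSeg t.1 = t :=
  le_antisymm (qInitSeg_maxInitSeg t.1) (le_maxInitSeg_iff.2 (QInitSeg.refl t.1))

theorem isOpen_setOf_mem (q : ℚ) : IsOpen {u : wQ | q ∈ u.1} := by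
  refine isOpen_iff_forall_mem_open.2 fun t hqt => ?_
  let s : wQ := ⟨{r ∈ t.1 | r < q}, t.2.mono (sep_subset _ _)⟩
  have hst : s < t := lt_of_le_of_ne (QInitSeg.sep_lt t.1 q) fun h =>
    lt_irrefl q (show q ∈ s.1 from h ▸ hqt).2
  refine ⟨Ioc s t, fun u ⟨hsu, hut⟩ => ?_, isOpen_intervalTopology_Ioc s t, hst, le_rfl⟩
  obtain ⟨r, hru, hrs⟩ := exists_mem_diff_of_lt hsu
  by_contra hqu
  exact hrs ⟨hut.1 hru, (hut.2 r hru q hqt hqu).lt_of_ne fun h => hqu (h ▸ hru)⟩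

theorem isOpen_setOf_notMem (q : ℚ) : IsOpen {u : wQ | q ∉ u.1} :=
  isOpen_intervalTopology_of_isLowerSet fun _ _ hvu hu hv => hu (hvu.1 hv)

theorem isClosed_Iic (t : wQ) : IsClosed (Iic t) := by
  refine isOpen_compl_iff.1 (isOpen_iff_forall_mem_open.2 fun u hut => ?_)
  by_cases hsub : u.1 ⊆ t.1
  · obtain ⟨a, ha, y, hyt, hyu, hya⟩ : ∃ a ∈ u.1, ∃ y ∈ t.1, y ∉ u.1 ∧ y < a := by
      by_contra! h
      exact hut ⟨hsub, h⟩
    refine ⟨{v | a ∈ v.1} ∩ {v | y ∉ v.1}, fun v ⟨hav, hyv⟩ hvt => ?_,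
      (isOpen_setOf_mem a).inter (isOpen_setOf_notMem y), ha, hyu⟩
    exact (hvt.2 a hav y hyt hyv).not_gt hya
  · obtain ⟨q, hqu, hqt⟩ := not_subset.1 hsub
    exact ⟨{v | q ∈ v.1}, fun v hqv hvt => hqt (hvt.1 hqv), isOpen_setOf_mem q, hqu⟩

theorem isClopen_Iic (t : wQ) : IsClopen (Iic t) :=
  ⟨isClosed_Iic t, isOpen_intervalTopology_of_isLowerSet (isLowerSet_Iic t)⟩

theorem isCompact_Iic (t : wQ) : IsCompact (Iic t) :=
  isCompact_Iic_intervalTopology isChain_Iic t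

end wQ

open wQ

theorem mem_wqSets_iff_le_maxInitSeg {t : wQ} {x : ℚ → Bool} :
    x ∈ wqSets t ↔ t ≤ maxInitSeg {q | x q = true} :=
  le_maxInitSeg_iff.symm

theorem isProperTreeOfSets_wqSets : IsProperTreeOfSets wqSets := by
  classical
  refine isProperTreeOfSets_of_mem_iff isChain_Iic (fun t => ⟨fun q => decide (q ∈ t.1), ?_⟩)
    fun _ _ => mem_wqSets_iff_le_maxInitSeg
  simp [maxInitSeg_coe]

theorem isClosed_wqSets (t : wQ) : IsClosed (wqSets t) := by
  have h : wqSets t =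
      ⋂ a ∈ t.1, ({x | x a = true} ∩ ⋂ y ∈ Iio a \ t.1, {x | x y = false}) := by
    ext x
    simp only [wqSets, QInitSeg, subset_def, mem_ofPred_eq, mem_iInter, mem_inter_iff,
      Set.mem_sdiff, mem_Iio]
    constructor
    · rintro ⟨hsub, hseg⟩ a ha
      refine ⟨hsub a ha, fun y ⟨hya, hyt⟩ => ?_⟩
      by_contra hy
      exact (hseg a ha y (Bool.not_eq_false _ ▸ hy) hyt).not_gt hya
    · intro h
      refine ⟨fun a ha => (h a ha).1, fun a ha y hy hyt => not_lt.1 fun hya => ?_⟩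
      simp [(h a ha).2 y ⟨hya, hyt⟩] at hy
  rw [h]
  exact isClosed_biInter fun a _ => (isClosed_eq (continuous_apply a) continuous_const).inter
    (isClosed_biInter fun y _ => isClosed_eq (continuous_apply y) continuous_const)

theorem wqChar_apply (t : wQ) (x : ℚ → Bool) :
    wqChar t x = (Iic (maxInitSeg {q | x q = true})).indicator (fun _ => (1 : ℝ)) t := by
  classical
  simp only [wqChar, indicator_apply, mem_wqSets_iff_le_maxInitSeg, mem_Iic]

theorem continuous_wqChar : Continuous wqChar := by
  refine continuous_pi fun x => ?_
  simp only [wqChar_apply]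
  exact continuous_indicator (by simp [(isClopen_Iic _).frontier_eq]) continuous_const.continuousOn

theorem tendsto_wqChar_coclosedCompact : Tendsto wqChar (coclosedCompact wQ) (𝓝 0) := by
  refine tendsto_pi_nhds.2 fun x => tendsto_const_nhds.congr' ?_
  let m := maxInitSeg {q | x q = true}
  filter_upwards [(isCompact_Iic m).compl_mem_coclosedCompact_of_isClosed (isClosed_Iic m)]
    with t ht
  rw [wqChar_apply, indicator_of_notMem ht, Pi.zero_apply]

theorem wqChar_injective : Function.Injective wqChar :=
  fun _ _ h => isProperTreeOfSets_wqSets.2.2 (indicator_one_inj ℝ h)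

theorem zero_notMem_range_wqChar : (0 : (ℚ → Bool) → ℝ) ∉ range wqChar := by
  rintro ⟨t, ht⟩
  obtain ⟨x, hx⟩ := isProperTreeOfSets_wqSets.2.1 t
  simpa [wqChar, hx] using congrFun ht x

/-- The one-point compactification of `wℚ` is Rosenthal compact: `{A_t : t ∈ wℚ}` is a
proper tree of sets whose members are simultaneously `F_σ` and `G_δ` in the Cantor set
`2^ℚ` (hence their characteristic functions are of Baire class one), and `A(wℚ)` is
homeomorphic to `{1_{A_t} : t ∈ wℚ} ∪ {0}` with `∞` corresponding to `0`. -/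
theorem onePoint_wQ_isRosenthal :
    IsProperTreeOfSets wqSets ∧
    (∀ t : wQ, (∃ F : ℕ → Set (ℚ → Bool), (∀ n, IsClosed (F n)) ∧ wqSets t = ⋃ n, F n) ∧
      IsGδ (wqSets t)) ∧
    (∀ t : wQ, BaireClassOne (wqChar t)) ∧
    (∃ h : OnePoint wQ ≃ₜ ↥(Set.range wqChar ∪ {0}), (h OnePoint.infty).1 = 0) ∧
    IsRosenthal (OnePoint wQ) := by
  have hchar : ∀ t, BaireClassOne (wqChar t) := fun t =>
    (isClosed_wqSets t).baireClassOne_indicator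
  let h := homeomorphRangeUnion continuous_wqChar wqChar_injective zero_notMem_range_wqChar
    tendsto_wqChar_coclosedCompact
  refine ⟨isProperTreeOfSets_wqSets,
    fun t => ⟨⟨fun _ => wqSets t, fun _ => isClosed_wqSets t, (iUnion_const _).symm⟩,
      (isClosed_wqSets t).isGδ⟩,
    hchar, ⟨h, rfl⟩, inferInstance, ℚ → Bool, inferInstance, inferInstance, _, ?_, ⟨h⟩⟩
  rintro f (⟨t, rfl⟩ | rfl)
  exacts [hchar t, baireClassOne_const 0]
end
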